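/- arXiv:1509.04535 — 6 statements merged into one kernel-verified Lean document; each statement's English description precedes it below -/
import Mathlib

section
/- Let K be a field of characteristic p > 0 and L/K a Galois extension of degree p. Then L = K(a) for some a with a^p - a = b ∈ K, where b is not of the form x^p - x for any x ∈ K. -/
/-!
The Galois group is cyclic of order `p`; let `σ` generate it. For `c` of trace `1`, the element
`a = -∑ i < p, i * σ^i c` satisfies `σ a = a + 1`, so `a ∉ K`, hence `a` generates `L` as the
degree is prime, and `a^p - a` is `σ`-fixed, hence lies in `K`. If `b = x^p - x` with `x ∈ K`,
then `a - x` is a root of `X^p - X`; these roots form the prime field, forcing `a ∈ K`.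
-/

open Finset

theorem IsCyclic.sum_univ_eq_sum_range_pow {G M : Type*} [Group G] [Fintype G]
    [AddCommMonoid M] {g : G} (hg : ∀ x, x ∈ Subgroup.zpowers g) (f : G → M) :
    ∑ x, f x = ∑ i ∈ range (orderOf g), f (g ^ i) := by
  classical
  rw [← IsCyclic.image_range_orderOf hg, sum_image]
  exact fun i hi j hj ↦ pow_injOn_Iio_orderOf (by simpa using hi) (by simpa using hj)

section AddOne

variable {K L : Type*} [CommSemiring K] [Ring L] [Algebra K L]

theorem AlgEquiv.exists_apply_eq_add_one_of_sum_pow_eq_one (σ : L ≃ₐ[K] L) {n : ℕ}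
    (hσ : σ ^ n = 1) (hn : (n : L) = 0) {c : L} (hc : ∑ i ∈ range n, (σ ^ i) c = 1) :
    ∃ a : L, σ a = a + 1 := by
  have shift : ∀ f : ℕ → L, f n = f 0 → ∑ i ∈ range n, f (i + 1) = ∑ i ∈ range n, f i :=
    fun f hf ↦ by rw [← add_left_inj (f 0), ← sum_range_succ', sum_range_succ, hf]
  have hc' : ∑ i ∈ range n, (σ ^ (i + 1)) c = 1 :=
    (shift (fun i ↦ (σ ^ i) c) (by rw [hσ, pow_zero])).trans hc
  have hS : ∑ i ∈ range n, (i : L) * (σ ^ (i + 1)) c + 1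
      = ∑ i ∈ range n, (i : L) * (σ ^ i) c := by
    simpa only [Nat.cast_add, Nat.cast_one, add_mul, one_mul, sum_add_distrib, hc'] using
      shift (fun i ↦ (i : L) * (σ ^ i) c) (by rw [hn, Nat.cast_zero, zero_mul, zero_mul])
  refine ⟨-∑ i ∈ range n, (i : L) * (σ ^ i) c, ?_⟩
  simp only [map_neg, map_sum, map_mul, map_natCast, ← AlgEquiv.mul_apply, ← pow_succ']
  rw [← hS]
  abel

end AddOne

section Galois

variable {K L : Type*} [Field K] [Field L] [Algebra K L]

theorem IsGalois.exists_apply_eq_add_one [FiniteDimensional K L] [IsGalois K L]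
    {σ : Gal(L/K)} (hσ : ∀ g, g ∈ Subgroup.zpowers σ) (hdeg : (Module.finrank K L : L) = 0) :
    ∃ a : L, σ a = a + 1 := by
  obtain ⟨c, hc⟩ := Algebra.trace_surjective K L 1
  have horder : orderOf σ = Module.finrank K L := by
    rw [orderOf_eq_card_of_forall_mem_zpowers hσ, IsGalois.card_aut_eq_finrank]
  have hsum : ∑ i ∈ range (orderOf σ), (σ ^ i) c = 1 := by
    rw [← IsCyclic.sum_univ_eq_sum_range_pow hσ (· c), ← trace_eq_sum_automorphisms, hc, map_one]
  exact σ.exists_apply_eq_add_one_of_sum_pow_eq_one (pow_orderOf_eq_one σ) (by rwa [horder]) hsum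

theorem IsGalois.mem_range_algebraMap_of_apply_eq_self [FiniteDimensional K L] [IsGalois K L]
    {σ : Gal(L/K)} (hσ : ∀ g, g ∈ Subgroup.zpowers σ) {x : L} (hx : σ x = x) :
    x ∈ Set.range (algebraMap K L) :=
  (IsGalois.mem_range_algebraMap_iff_fixed x).mpr fun g ↦
    (Subgroup.zpowers_le (H := MulAction.stabilizer Gal(L/K) x)).mpr hx (hσ g)

theorem Algebra.adjoin_singleton_eq_top_of_finrank_prime (hp : (Module.finrank K L).Prime)
    {a : L} (ha : a ∉ Set.range (algebraMap K L)) : Algebra.adjoin K {a} = ⊤ :=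
  ((Subalgebra.isSimpleOrder_of_finrank_prime K L hp).eq_bot_or_eq_top _).resolve_left
    fun h ↦ ha (Algebra.mem_bot.mp (h ▸ Algebra.self_mem_adjoin_singleton K a))

variable (p : ℕ) [Fact p.Prime] [CharP L p]

theorem mem_range_algebraMap_of_pow_eq_self {t : L} (ht : t ^ p = t) :
    t ∈ Set.range (algebraMap K L) := by
  obtain ⟨n, rfl⟩ := (mem_bot_iff_intCast p L).mp ((Subfield.mem_bot_iff_pow_eq_self L p).mpr ht)
  exact ⟨n, map_intCast _ n⟩

theorem pow_sub_self_ne_of_notMem_range {a : L} (ha : a ∉ Set.range (algebraMap K L)) {b : K}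
    (hb : a ^ p - a = algebraMap K L b) (x : K) : x ^ p - x ≠ b := by
  rintro rfl
  have : (a - algebraMap K L x) ^ p = a - algebraMap K L x := by
    rw [map_sub, map_pow] at hb
    rw [sub_pow_char]
    linear_combination hb
  obtain ⟨y, hy⟩ := mem_range_algebraMap_of_pow_eq_self (K := K) p this
  exact ha ⟨y + x, by rw [map_add, hy, sub_add_cancel]⟩

end Galois

/-- Artin–Schreier theorem: every Galois extension of degree `p` of a field of
characteristic `p > 0` is generated by a root of a polynomial `X^p - X - b`
with `b` not of the form `x^p - x` in the base field. -/
theorem artinSchreier_of_galois_degree_p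
    (p : ℕ) (hp : p.Prime) (K L : Type) [Field K] [Field L] [Algebra K L]
    [CharP K p] [FiniteDimensional K L] [IsGalois K L]
    (hdeg : Module.finrank K L = p) :
    ∃ (a : L) (b : K), Algebra.adjoin K {a} = ⊤ ∧
      a ^ p - a = algebraMap K L b ∧ ∀ x : K, x ^ p - x ≠ b := by
  have : Fact p.Prime := ⟨hp⟩
  have : CharP L p := charP_of_injective_algebraMap (algebraMap K L).injective p
  have : IsCyclic Gal(L/K) :=
    isCyclic_of_prime_card (by rw [IsGalois.card_aut_eq_finrank, hdeg])
  obtain ⟨σ, hσ⟩ := IsCyclic.exists_generator (α := Gal(L/K))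
  obtain ⟨a, ha⟩ := IsGalois.exists_apply_eq_add_one hσ (by rw [hdeg, CharP.cast_eq_zero])
  have haK : a ∉ Set.range (algebraMap K L) := by
    rintro ⟨x, rfl⟩
    simp at ha
  obtain ⟨b, hb⟩ : a ^ p - a ∈ Set.range (algebraMap K L) :=
    IsGalois.mem_range_algebraMap_of_apply_eq_self hσ <| by
      rw [map_sub, map_pow, ha, add_pow_char, one_pow, add_sub_add_right_eq_sub]
  exact ⟨a, b, Algebra.adjoin_singleton_eq_top_of_finrank_prime (hdeg ▸ hp) haK, hb.symm,
    pow_sub_self_ne_of_notMem_range p haK hb.symm⟩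
end

section
/- Let (K,v) be a valued field of characteristic p > 0 with M_v ⊆ {x^p - x : x ∈ K}. Let L = K(a) be an immediate Galois extension of degree p with a^p - a = b ∈ K, and let ṽ be an extension of v to L. Then the set C = {v(x^p - x - b) : x ∈ K} is contained in the strictly negative part of the value group and has no greatest element. -/
/-!
Writing `℘ c = c ^ p - c`, additivity of Frobenius gives `℘ (x - a) = ℘ x - b` for `x ∈ K`.
Since `℘` raises values above `1` to the `p`-th power, `v (℘ x - b) = w (x - a) ^ p` as soon as
either side exceeds `1`.

If `v (℘ x - b) ≤ 1`, then `w (x - a) ≤ 1`; the residue fields agree, so `x - a` can be moved by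
an element of `K` into the maximal ideal of `w`, where `℘` takes values in `M_v ⊆ ℘(K)`. Hence `x - a`
differs from an element of `K` by a root of `X ^ p - X`, i.e. an element of `𝔽_p`, and `a ∈ K`,
contradicting `[L : K] = p`. So `C` lies above `1` (multiplicatively).

Given `x`, immediateness yields `d ∈ K` with `w (x - a - d) < w (x - a)`, and then
`v (℘ (x - d) - b) < v (℘ x - b)`: `C` has no extremal element.
-/

namespace Valuation

variable {R Γ : Type*} [Ring R] [LinearOrderedCommMonoidWithZero Γ] (w : Valuation R Γ)
  {p : ℕ} {c : R}

theorem map_pow_sub_self_of_one_lt (hp : 1 < p) (hc : 1 < w c) : w (c ^ p - c) = w c ^ p := by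
  rw [map_sub_eq_of_lt_left _ (by rw [map_pow]; exact lt_self_pow₀ hc hp), map_pow]

theorem one_lt_map_pow_sub_self_iff (hp : 1 < p) : 1 < w (c ^ p - c) ↔ 1 < w c := by
  refine ⟨fun h => ?_, fun hc => ?_⟩
  · by_contra! hc
    have : w (c ^ p - c) ≤ 1 :=
      (map_sub _ _ _).trans (max_le (by rw [map_pow]; exact pow_le_one₀ zero_le hc) hc)
    exact this.not_gt h
  · rw [map_pow_sub_self_of_one_lt w hp hc]
    exact one_lt_pow₀ hc (by omega)

theorem map_pow_sub_self_lt_pow {γ : Γ} (hp : p ≠ 0) (hγ : 1 ≤ γ) (hc : w c < γ) :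
    w (c ^ p - c) < γ ^ p := by
  refine (map_sub _ _ _).trans_lt (max_lt ?_ (hc.trans_le (le_self_pow₀ hγ hp)))
  rw [map_pow]
  exact pow_lt_pow_left₀ hc zero_le hp

end Valuation

theorem sub_pow_char_sub_sub {R : Type*} [CommRing R] {p : ℕ} [Fact p.Prime] [CharP R p]
    (x y : R) : (x - y) ^ p - (x - y) = (x ^ p - x) - (y ^ p - y) := by
  rw [sub_pow_char]
  ring

section Extension

variable {K L : Type*} [Field K] [Field L] [Algebra K L]

theorem mem_range_algebraMap_of_pow_eq_self_s7 (p : ℕ) [Fact p.Prime] [CharP K p] {c : L}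
    (hc : c ^ p = c) : c ∈ Set.range (algebraMap K L) := by
  have : CharP L p := charP_of_injective_algebraMap (algebraMap K L).injective p
  obtain ⟨n, rfl⟩ := (mem_bot_iff_intCast p L).1 ((Subfield.mem_bot_iff_pow_eq_self L p).2 hc)
  exact ⟨n, map_intCast _ n⟩

theorem notMem_range_algebraMap_of_adjoin_eq_top {a : L} (hgen : Algebra.adjoin K {a} = ⊤)
    (hrank : Module.finrank K L ≠ 1) : a ∉ Set.range (algebraMap K L) := by
  intro ha
  refine hrank (Subalgebra.bot_eq_top_iff_finrank_eq_one.1 (top_unique ?_))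
  rw [← hgen, Algebra.adjoin_le_iff, Set.singleton_subset_iff]
  exact Algebra.mem_bot.2 ha

variable {Γ : Type*} [LinearOrderedCommGroupWithZero Γ] {v : Valuation K Γ} {w : Valuation L Γ}

theorem exists_map_sub_algebraMap_lt (hext : ∀ x : K, w (algebraMap K L x) = v x)
    (himmval : ∀ y : L, y ≠ 0 → ∃ x : K, w y = v x)
    (himmres : ∀ y : L, w y ≤ 1 → ∃ x : K, v x ≤ 1 ∧ w (y - algebraMap K L x) < 1)
    {c : L} (hc : c ≠ 0) : ∃ d : K, w (c - algebraMap K L d) < w c := by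
  obtain ⟨y, hy⟩ := himmval c hc
  have hwc : w c ≠ 0 := (map_ne_zero w).2 hc
  have hy0 : algebraMap K L y ≠ 0 := by
    rw [← map_ne_zero w, hext, ← hy]
    exact hwc
  have hunit : w (c / algebraMap K L y) = 1 := by
    rw [map_div₀, hext, ← hy, div_self hwc]
  obtain ⟨u, -, hu⟩ := himmres _ hunit.le
  refine ⟨y * u, ?_⟩
  calc w (c - algebraMap K L (y * u))
      = w (algebraMap K L y) * w (c / algebraMap K L y - algebraMap K L u) := by
        rw [← map_mul, mul_sub, mul_div_cancel₀ _ hy0, map_mul]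
    _ < w c * 1 := by
        rw [hext, ← hy]
        exact mul_lt_mul_of_pos_left hu (zero_lt_iff.2 hwc)
    _ = w c := mul_one _

theorem mem_range_algebraMap_of_map_pow_sub_self_le_one {p : ℕ} (hp : p.Prime) [CharP K p]
    (hext : ∀ x : K, w (algebraMap K L x) = v x)
    (himmres : ∀ y : L, w y ≤ 1 → ∃ x : K, v x ≤ 1 ∧ w (y - algebraMap K L x) < 1)
    (hM : ∀ m : K, v m < 1 → ∃ x : K, x ^ p - x = m)
    {c : L} {m : K} (hm : c ^ p - c = algebraMap K L m) (hvm : v m ≤ 1) :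
    c ∈ Set.range (algebraMap K L) := by
  have : Fact p.Prime := ⟨hp⟩
  have : CharP L p := charP_of_injective_algebraMap (algebraMap K L).injective p
  have hwc : w c ≤ 1 := by
    rw [← not_lt, ← w.one_lt_map_pow_sub_self_iff hp.one_lt, hm, hext, not_lt]
    exact hvm
  obtain ⟨y, -, hy⟩ := himmres c hwc
  have hshift : (c - algebraMap K L y) ^ p - (c - algebraMap K L y) =
      algebraMap K L (m - (y ^ p - y)) := by
    rw [sub_pow_char_sub_sub, hm]
    simp
  have hsmall : v (m - (y ^ p - y)) < 1 := by
    rw [← hext, ← hshift, ← one_pow p]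
    exact w.map_pow_sub_self_lt_pow hp.ne_zero le_rfl hy
  obtain ⟨z, hz⟩ := hM _ hsmall
  have hroot : (c - algebraMap K L y - algebraMap K L z) ^ p =
      c - algebraMap K L y - algebraMap K L z := by
    rw [← sub_eq_zero, sub_pow_char_sub_sub, hshift, ← map_pow, ← map_sub, hz, sub_self]
  obtain ⟨t, ht⟩ := mem_range_algebraMap_of_pow_eq_self_s7 (K := K) p hroot
  exact ⟨y + z + t, by rw [map_add, map_add, ht]; ring⟩

end Extension

theorem set_C_neg_and_no_last_element_general
    (p : ℕ) (hp : p.Prime) (K L : Type) [Field K] [Field L] [Algebra K L]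
    [CharP K p]
    (hdeg : Module.finrank K L = p)
    {Γ : Type} [LinearOrderedCommGroupWithZero Γ]
    (v : Valuation K Γ) (w : Valuation L Γ)
    (hext : ∀ x : K, w (algebraMap K L x) = v x)
    -- the extension is immediate: same value group and same residue field
    (himmval : ∀ y : L, y ≠ 0 → ∃ x : K, w y = v x)
    (himmres : ∀ y : L, w y ≤ 1 → ∃ x : K, v x ≤ 1 ∧ w (y - algebraMap K L x) < 1)
    (hM : ∀ m : K, v m < 1 → ∃ x : K, x ^ p - x = m)
    (a : L) (b : K) (hgen : Algebra.adjoin K {a} = ⊤)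
    (hab : a ^ p - a = algebraMap K L b) :
    (∀ γ ∈ {γ : Γ | ∃ x : K, v (x ^ p - x - b) = γ}, 1 < γ) ∧
      (∀ γ ∈ {γ : Γ | ∃ x : K, v (x ^ p - x - b) = γ},
        ∃ γ' ∈ {γ : Γ | ∃ x : K, v (x ^ p - x - b) = γ}, γ' < γ) := by
  have : Fact p.Prime := ⟨hp⟩
  have : CharP L p := charP_of_injective_algebraMap (algebraMap K L).injective p
  have ha : a ∉ Set.range (algebraMap K L) :=
    notMem_range_algebraMap_of_adjoin_eq_top hgen (hdeg ▸ hp.one_lt.ne')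
  have hkey (x : K) : (algebraMap K L x - a) ^ p - (algebraMap K L x - a) =
      algebraMap K L (x ^ p - x - b) := by
    rw [sub_pow_char_sub_sub, hab]
    simp
  have hneg (x : K) : 1 < v (x ^ p - x - b) := by
    by_contra! h
    obtain ⟨t, ht⟩ :=
      mem_range_algebraMap_of_map_pow_sub_self_le_one hp hext himmres hM (hkey x) h
    exact ha ⟨x - t, by rw [map_sub, ht]; ring⟩
  refine ⟨by rintro _ ⟨x, rfl⟩; exact hneg x, ?_⟩
  rintro _ ⟨x, rfl⟩
  have hc : 1 < w (algebraMap K L x - a) := by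
    rw [← w.one_lt_map_pow_sub_self_iff hp.one_lt, hkey, hext]
    exact hneg x
  obtain ⟨d, hd⟩ := exists_map_sub_algebraMap_lt hext himmval himmres
    (w.ne_zero_iff.1 (zero_lt_one.trans hc).ne')
  refine ⟨_, ⟨x - d, rfl⟩, ?_⟩
  rw [← hext, ← hkey, ← hext, ← hkey, w.map_pow_sub_self_of_one_lt hp.one_lt hc,
    map_sub (algebraMap K L) x d,
    sub_right_comm]
  exact w.map_pow_sub_self_lt_pow hp.ne_zero hc.le hd

/-- Step 1 of the theorem: if `M_v ⊆ ℘(K)` and `L = K(a)` is an immediate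
Galois extension of degree `p` with `a^p - a = b ∈ K`, then the set
`C = {v (x^p - x - b) | x ∈ K}` consists of strictly negative elements of the
value group (multiplicatively: `1 < γ`) and has no last element (additively;
multiplicatively: no least element). -/
theorem set_C_neg_and_no_last_element
    (p : ℕ) (hp : p.Prime) (K L : Type) [Field K] [Field L] [Algebra K L]
    [CharP K p] [FiniteDimensional K L] [IsGalois K L]
    (hdeg : Module.finrank K L = p)
    {Γ : Type} [LinearOrderedCommGroupWithZero Γ]
    (v : Valuation K Γ) (w : Valuation L Γ)
    (hext : ∀ x : K, w (algebraMap K L x) = v x)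
    -- the extension is immediate: same value group and same residue field
    (himmval : ∀ y : L, y ≠ 0 → ∃ x : K, w y = v x)
    (himmres : ∀ y : L, w y ≤ 1 → ∃ x : K, v x ≤ 1 ∧ w (y - algebraMap K L x) < 1)
    (hM : ∀ m : K, v m < 1 → ∃ x : K, x ^ p - x = m)
    (a : L) (b : K) (hgen : Algebra.adjoin K {a} = ⊤)
    (hab : a ^ p - a = algebraMap K L b) :
    (∀ γ ∈ {γ : Γ | ∃ x : K, v (x ^ p - x - b) = γ}, 1 < γ) ∧
      (∀ γ ∈ {γ : Γ | ∃ x : K, v (x ^ p - x - b) = γ},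
        ∃ γ' ∈ {γ : Γ | ∃ x : K, v (x ^ p - x - b) = γ}, γ' < γ) :=
  set_C_neg_and_no_last_element_general p hp K L hdeg v w hext himmval himmres hM a b hgen hab
end

section
/- Let (K,v) be a valued field, P(X) = X^p - X - b ∈ K[X] with char K = p > 0, and let {a_ρ}_{ρ<κ} be a sequence in K such that v(P(a_ρ)) is strictly increasing and all v(P(a_ρ)) < 0. Then v(a_β - a_α) = (1/p)·v(P(a_α)) for all α < β < κ, and in particular {a_ρ} is pseudo-convergent. -/
/-- Step 2 of the theorem: if `v (P (a ρ))` is strictly increasing additively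
(`StrictAnti` multiplicatively) and always of negative value (`1 < ·`
multiplicatively) for `P X = X^p - X - b`, then
`v (a β - a α) = (1/p) · v (P (a α))` (multiplicatively,
`v (a β - a α) ^ p = v (P (a α))`) for `α < β`, and in particular the sequence
`a` is pseudo-convergent. -/
theorem sequence_pseudo_convergent_of_artinSchreier_values
    (p : ℕ) (hp : p.Prime) (K : Type) [Field K] [CharP K p]
    {Γ : Type} [LinearOrderedCommGroupWithZero Γ] (v : Valuation K Γ)
    (b : K) {ι : Type} [LinearOrder ι] (a : ι → K)
    (hmono : StrictAnti (fun ρ => v (a ρ ^ p - a ρ - b)))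
    (hneg : ∀ ρ, 1 < v (a ρ ^ p - a ρ - b)) :
    (∀ α β, α < β → v (a β - a α) ^ p = v (a α ^ p - a α - b)) ∧
      (∀ α β γ, α < β → β < γ → v (a γ - a β) < v (a β - a α)) := by
  haveI : Fact p.Prime := ⟨hp⟩
  have key : ∀ α β, α < β → v (a β - a α) ^ p = v (a α ^ p - a α - b) := by
    intro α β hαβ
    set c := a β - a α with hc
    have hfrob : c ^ p - c = (a β ^ p - a β - b) - (a α ^ p - a α - b) := by
      rw [hc, sub_pow_char]; ring
    have hlt : v (a β ^ p - a β - b) < v (a α ^ p - a α - b) := hmono hαβ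
    have hval : v (c ^ p - c) = v (a α ^ p - a α - b) := by
      rw [hfrob, v.map_sub_eq_of_lt_right hlt]
    have hcgt : 1 < v c := by
      by_contra h
      push_neg at h
      have h1 : v (c ^ p - c) ≤ 1 := by
        apply v.map_sub_le
        · rw [map_pow]
          exact pow_le_one' h p
        · exact h
      exact absurd (hval ▸ h1) (not_le.mpr (hneg α))
    have hclt : v c < v c ^ p := by
      conv_lhs => rw [← pow_one (v c)]
      exact pow_lt_pow_right₀ hcgt hp.one_lt
    have : v (c ^ p - c) = v c ^ p := by
      rw [← map_pow]
      exact v.map_sub_eq_of_lt_left (by rwa [map_pow])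
    rw [← this, hval]
  refine ⟨key, fun α β γ hαβ hβγ => ?_⟩
  have h1 := key α β hαβ
  have h2 := key β γ hβγ
  have hlt : v (a γ - a β) ^ p < v (a β - a α) ^ p := by
    rw [h1, h2]; exact hmono hαβ
  by_contra h
  push_neg at h
  exact absurd (pow_le_pow_left' h p) (not_le.mpr hlt)
end

section
/- Let Γ be a linearly ordered abelian group, κ an ordinal, {γ_ρ}_{ρ<κ} a strictly increasing sequence in Γ, and for i in a finite index set I let λ_i ∈ Γ. Then there exists i_0 ∈ I and an index λ < κ such that for all ρ > λ and all i ∈ I with i ≠ i_0: λ_i + i·γ_ρ > λ_{i_0} + i_0·γ_ρ, where i·γ denotes the i-fold sum. -/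
/-!
Of two affine functions `a + m • x` and `b + n • x` with slopes `m < n`, the flatter one, once
it is not above the steeper one, stays strictly below it at every later point. Hence along a
strictly increasing sequence any two of the finitely many functions are eventually strictly
comparable in a fixed way, and the pointwise minimum at any sufficiently late index is the
eventual strict minimum.
-/

open Filter

section AffineComparison

variable {Γ : Type*} [AddCommMonoid Γ] [LinearOrder Γ] [IsOrderedCancelAddMonoid Γ]

theorem add_nsmul_lt_add_nsmul_of_lt_of_le {a b x y : Γ} {m n : ℕ} (hmn : m < n) (hxy : x < y)
    (h : a + m • x ≤ b + n • x) : a + m • y < b + n • y := by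
  obtain ⟨k, rfl⟩ := Nat.exists_eq_add_of_lt hmn
  have hax : a ≤ b + (k + 1) • x := by
    rw [add_assoc m, add_nsmul, add_left_comm, add_comm a] at h
    exact le_of_add_le_add_left h
  calc a + m • y < b + (k + 1) • y + m • y :=
        add_lt_add_of_lt_of_le (hax.trans_lt (by gcongr)) le_rfl
    _ = b + (m + k + 1) • y := by rw [add_assoc m, add_comm m, add_nsmul y (k + 1) m, add_assoc]

theorem StrictMono.eventually_add_nsmul_lt_or_gt {ι : Type*} [Preorder ι] [NoMaxOrder ι]
    {γ : ι → Γ} (hγ : StrictMono γ) (a b : Γ) {m n : ℕ} (hmn : m ≠ n) :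
    (∀ᶠ ρ in atTop, a + m • γ ρ < b + n • γ ρ) ∨ (∀ᶠ ρ in atTop, b + n • γ ρ < a + m • γ ρ) := by
  wlog hlt : m < n generalizing a b m n
  · exact (this b a hmn.symm (by omega)).symm
  by_cases hmeet : ∃ ρ₁, a + m • γ ρ₁ ≤ b + n • γ ρ₁
  · obtain ⟨ρ₁, hρ₁⟩ := hmeet
    left
    filter_upwards [eventually_gt_atTop ρ₁] with ρ hρ
    exact add_nsmul_lt_add_nsmul_of_lt_of_le hlt (hγ hρ) hρ₁
  · push Not at hmeet
    exact Or.inr (Eventually.of_forall hmeet)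

end AffineComparison

theorem Finset.exists_eventually_lt_of_pairwise_eventually_lt_or_gt {κ ι α : Type*}
    [LinearOrder α] {F : Filter ι} [F.NeBot] (f : κ → ι → α) {s : Finset κ} (hs : s.Nonempty)
    (h : ∀ i ∈ s, ∀ j ∈ s, i ≠ j →
      (∀ᶠ x in F, f i x < f j x) ∨ (∀ᶠ x in F, f j x < f i x)) :
    ∃ i₀ ∈ s, ∀ᶠ x in F, ∀ i ∈ s, i ≠ i₀ → f i₀ x < f i x := by
  have hlate : ∀ᶠ x in F, ∀ i ∈ s, ∀ j ∈ s, (∀ᶠ y in F, f i y < f j y) → f i x < f j x := by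
    simp only [eventually_all_finset, eventually_imp_distrib_left]
    exact fun _ _ _ _ hij => hij
  obtain ⟨x, hx⟩ := hlate.exists
  obtain ⟨i₀, hi₀, hmin⟩ := s.exists_min_image (f · x) hs
  have hwins : ∀ i ∈ s, i ≠ i₀ → ∀ᶠ y in F, f i₀ y < f i y := fun i hi hne =>
    (h i₀ hi₀ i hi hne.symm).resolve_right fun hlt => (hx i hi i₀ hi₀ hlt).not_ge (hmin i hi)
  exact ⟨i₀, hi₀, by simpa only [eventually_all_finset, eventually_imp_distrib_left] using hwins⟩

/-- Kaplansky's Lemma 4: given a strictly increasing sequence `γ` in a linearly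
ordered abelian group and finitely many affine functions `ρ ↦ λ i + i • γ ρ`
with distinct integer slopes `i ∈ I`, eventually exactly one of them is
strictly minimal. -/
theorem eventually_unique_minimal_affine
    (Γ : Type) [AddCommGroup Γ] [LinearOrder Γ] [IsOrderedAddMonoid Γ]
    {ι : Type} [LinearOrder ι] [Nonempty ι]
    (γ : ι → Γ) (hγ : StrictMono γ)
    (I : Finset ℕ) (hI : I.Nonempty) (lam : ℕ → Γ) :
    ∃ i₀ ∈ I, ∃ ρ₀ : ι, ∀ ρ, ρ₀ < ρ → ∀ i ∈ I, i ≠ i₀ →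
      lam i₀ + i₀ • γ ρ < lam i + i • γ ρ := by
  by_cases hmax : ∃ t : ι, IsMax t
  · obtain ⟨t, ht⟩ := hmax
    obtain ⟨i₀, hi₀⟩ := hI
    exact ⟨i₀, hi₀, t, fun ρ hρ => absurd hρ ht.not_lt⟩
  have : NoMaxOrder ι := ⟨fun a => not_isMax_iff.1 (not_exists.1 hmax a)⟩
  obtain ⟨i₀, hi₀, hev⟩ := I.exists_eventually_lt_of_pairwise_eventually_lt_or_gt
    (fun i ρ => lam i + i • γ ρ) hI
    fun i _ j _ hij => hγ.eventually_add_nsmul_lt_or_gt (lam i) (lam j) hij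
  obtain ⟨ρ₀, hρ₀⟩ := eventually_atTop.1 hev
  exact ⟨i₀, hi₀, ρ₀, fun ρ hρ => hρ₀ ρ hρ.le⟩
end

section
/- Let (K,v) be a valued field of characteristic p > 0 with M_v ⊆ {x^p - x : x ∈ K}, and let L = K(a) with a^p - a = b ∉ ℘(K) be an immediate Galois extension of degree p with extension ṽ of v. If {a_ρ}_{ρ<κ} is the pseudo-convergent sequence constructed from a cofinal sequence in C = {v(x^p - x - b) : x ∈ K}, then every polynomial P_0 ∈ K[X] for which v(P_0(a_ρ)) is ultimately strictly increasing has degree at least p. -/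
/-!
Multiplicatively, put `δ ρ = v (a ρ ^ p - a ρ - b)`. Since `M_v ⊆ ℘(K)` and `b ∉ ℘(K)`, all `δ ρ > 1`,
so `℘(a σ - a ρ)` has value `δ ρ` and `γ ρ := v (a σ - a ρ)` (for any `σ > ρ`) satisfies
`γ ρ ^ p = δ ρ`. By Kaplansky's Taylor-expansion argument, a polynomial `T` whose Hasse derivatives
have eventually constant value along `a` has either eventually constant value, or eventually value
`c * γ ρ ^ e` with `1 ≤ e ≤ deg T`. Induct on `deg T < p`. Linear polynomials are eventually
constant because, by cofinality, `a` has no pseudo-limit in `K`. If `T` of degree `2 ≤ n < p` were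
of the second kind, expanding `X ^ p - X - b` in base `T` would give `γ ρ ^ p = κ * γ ρ ^ (t * e)`
with `t * n ≤ p`, hence `t * e = p`, impossible for `p` prime and `1 ≤ e ≤ n < p`.
-/

open Polynomial Filter

lemma StrictAnti.eventually_lt_or_eventually_gt {ι α : Type*} [Preorder ι] [NoMaxOrder ι]
    [LinearOrder α] {f : ι → α} (hf : StrictAnti f) (x : α) :
    (∀ᶠ ρ in atTop, f ρ < x) ∨ ∀ᶠ ρ in atTop, x < f ρ := by
  by_cases h : ∃ ρ, f ρ ≤ x
  · obtain ⟨ρ, hρ⟩ := h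
    exact .inl <| (eventually_gt_atTop ρ).mono fun σ hσ => (hf hσ).trans_le hρ
  · exact .inr <| .of_forall fun ρ => not_le.1 (not_exists.1 h ρ)

lemma StrictAnti.not_eventually_eq {ι α : Type*} [SemilatticeSup ι] [Nonempty ι] [NoMaxOrder ι]
    [Preorder α] {f : ι → α} (hf : StrictAnti f) (x : α) : ¬ ∀ᶠ ρ in atTop, f ρ = x := by
  intro h
  obtain ⟨ρ, hρ⟩ := h.exists
  obtain ⟨σ, hσ, hρσ⟩ := (h.and (eventually_gt_atTop ρ)).exists
  exact (hf hρσ).ne (hσ.trans hρ.symm)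

lemma Finset.Nonempty.exists_eventually_forall_lt {α β ι : Type*} [Preorder β] {l : Filter ι}
    {s : Finset α} (hs : s.Nonempty) (t : α → ι → β)
    (h : ∀ i ∈ s, ∀ j ∈ s, i ≠ j → (∀ᶠ x in l, t i x < t j x) ∨ ∀ᶠ x in l, t j x < t i x) :
    ∃ i ∈ s, ∀ᶠ x in l, ∀ j ∈ s, j ≠ i → t j x < t i x := by
  classical
  induction hs using Finset.Nonempty.cons_induction with
  | singleton a =>
    exact ⟨a, mem_singleton_self a, .of_forall fun _ j hj hja => absurd (mem_singleton.1 hj) hja⟩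
  | cons a s ha hs ih =>
    obtain ⟨i, hi, hev⟩ := ih fun i hi j hj => h i (mem_cons_of_mem hi) j (mem_cons_of_mem hj)
    rcases h a (mem_cons_self a s) i (mem_cons_of_mem hi) (fun e => ha (e ▸ hi)) with hai | hia
    · refine ⟨i, mem_cons_of_mem hi, (hev.and hai).mono fun x ⟨hx, hax⟩ j hj hji => ?_⟩
      rcases mem_cons.1 hj with rfl | hj
      exacts [hax, hx j hj hji]
    · refine ⟨a, mem_cons_self a s, (hev.and hia).mono fun x ⟨hx, hia⟩ j hj hja => ?_⟩
      rcases mem_cons.1 hj with rfl | hj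
      · exact absurd rfl hja
      rcases eq_or_ne j i with rfl | hji
      exacts [hia, (hx j hj hji).trans hia]

section Gauge

variable {ι Γ : Type*} [LinearOrderedCommGroupWithZero Γ] {γ : ι → Γ}

lemma StrictAnti.const_mul_pow [Preorder ι] (hγ : StrictAnti γ) {c : Γ} (hc : c ≠ 0) {e : ℕ}
    (he : e ≠ 0) : StrictAnti fun ρ => c * γ ρ ^ e :=
  fun _ _ h => mul_lt_mul_of_pos_left (pow_lt_pow_left₀ (hγ h) zero_le he) (zero_lt_iff.2 hc)

lemma StrictAnti.apply_ne_zero [Preorder ι] [NoMaxOrder ι] (hγ : StrictAnti γ) (ρ : ι) :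
    γ ρ ≠ 0 :=
  let ⟨_, hσ⟩ := exists_gt ρ
  (zero_le.trans_lt (hγ hσ)).ne'

lemma eventually_lt_or_eventually_gt_mul_pow [Preorder ι] [NoMaxOrder ι] (hγ : StrictAnti γ)
    (c : Γ) {d : Γ} (hd : d ≠ 0) {i j : ℕ} (hij : i < j) :
    (∀ᶠ ρ in atTop, d * γ ρ ^ j < c * γ ρ ^ i) ∨ ∀ᶠ ρ in atTop, c * γ ρ ^ i < d * γ ρ ^ j := by
  have hsplit : ∀ ρ, d * γ ρ ^ j = d * γ ρ ^ (j - i) * γ ρ ^ i := fun ρ => by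
    rw [mul_assoc, ← pow_add, Nat.sub_add_cancel hij.le]
  have hpos : ∀ ρ, 0 < γ ρ ^ i := fun ρ => zero_lt_iff.2 (pow_ne_zero _ (hγ.apply_ne_zero ρ))
  refine ((hγ.const_mul_pow hd (Nat.sub_ne_zero_of_lt hij)).eventually_lt_or_eventually_gt c).imp
    (·.mono fun ρ h => ?_) (·.mono fun ρ h => ?_) <;> rw [hsplit]
  exacts [mul_lt_mul_of_pos_right h (hpos ρ), mul_lt_mul_of_pos_right h (hpos ρ)]

lemma exists_eventually_forall_mul_pow_lt [Preorder ι] [NoMaxOrder ι] (hγ : StrictAnti γ)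
    {α : Type*} {s : Finset α} (c : α → Γ) {e : α → ℕ} (he : Set.InjOn e s)
    (hc : ∃ i ∈ s, c i ≠ 0) :
    ∃ i ∈ s, c i ≠ 0 ∧ ∀ᶠ ρ in atTop, ∀ j ∈ s, j ≠ i → c j * γ ρ ^ e j < c i * γ ρ ^ e i := by
  classical
  obtain ⟨i, hi, hdom⟩ := (show (s.filter (c · ≠ 0)).Nonempty from
    let ⟨i, hi, hci⟩ := hc; ⟨i, Finset.mem_filter.2 ⟨hi, hci⟩⟩).exists_eventually_forall_lt
    (fun i ρ => c i * γ ρ ^ e i) fun i hi j hj hij => by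
      obtain ⟨hi, hci⟩ := Finset.mem_filter.1 hi
      obtain ⟨hj, hcj⟩ := Finset.mem_filter.1 hj
      rcases Nat.lt_or_gt_of_ne (he.ne hi hj hij) with h | h
      exacts [(eventually_lt_or_eventually_gt_mul_pow hγ _ hcj h).symm,
        eventually_lt_or_eventually_gt_mul_pow hγ _ hci h]
  obtain ⟨his, hci⟩ := Finset.mem_filter.1 hi
  refine ⟨i, his, hci, hdom.mono fun ρ h j hj hji => ?_⟩
  by_cases hcj : c j = 0
  · rw [hcj, zero_mul]
    exact zero_lt_iff.2 (mul_ne_zero hci (pow_ne_zero _ (hγ.apply_ne_zero ρ)))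
  · exact h j (Finset.mem_filter.2 ⟨hj, hcj⟩) hji

lemma eq_of_eventually_mul_pow_eq_pow [SemilatticeSup ι] [Nonempty ι] [NoMaxOrder ι]
    (hγ : StrictAnti γ) {κ : Γ} {m k : ℕ} (h : ∀ᶠ ρ in atTop, κ * γ ρ ^ m = γ ρ ^ k) :
    m = k := by
  by_contra hmk
  rcases Nat.lt_or_gt_of_ne hmk with hlt | hlt
  · refine (hγ.const_mul_pow one_ne_zero (Nat.sub_ne_zero_of_lt hlt)).not_eventually_eq κ
      (h.mono fun ρ hρ => ?_)
    rw [← Nat.sub_add_cancel hlt.le, pow_add] at hρ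
    exact (one_mul _).trans (mul_right_cancel₀ (pow_ne_zero _ (hγ.apply_ne_zero ρ)) hρ.symm)
  · obtain ⟨ρ, hρ⟩ := h.exists
    have hκ : κ ≠ 0 := left_ne_zero_of_mul (hρ ▸ pow_ne_zero k (hγ.apply_ne_zero ρ))
    refine (hγ.const_mul_pow hκ (Nat.sub_ne_zero_of_lt hlt)).not_eventually_eq 1
      (h.mono fun ρ hρ => ?_)
    rw [← Nat.sub_add_cancel hlt.le, pow_add, ← mul_assoc] at hρ
    exact mul_right_cancel₀ (pow_ne_zero k (hγ.apply_ne_zero ρ)) (hρ.trans (one_mul _).symm)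

end Gauge

lemma Polynomial.eval_eq_eval_add_sum_hasseDeriv {R : Type*} [CommRing R] (T : R[X]) (x y : R) :
    T.eval y = T.eval x +
      ∑ i ∈ Finset.range T.natDegree, (hasseDeriv (i + 1) T).eval x * (y - x) ^ (i + 1) := by
  have hy : T.eval y = (taylor x T).eval (y - x) := by rw [taylor_eval, sub_add_cancel]
  rw [hy, eval_eq_sum_range' (n := T.natDegree + 1) (by rw [natDegree_taylor]; omega),
    Finset.sum_range_succ', add_comm]
  simp only [taylor_coeff, hasseDeriv_zero', pow_zero, mul_one]

lemma Polynomial.natDegree_div_add_natDegree_le {k : Type*} [Field k] {W T : k[X]}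
    (hT : 0 < T.natDegree) (hTW : T.natDegree ≤ W.natDegree) :
    (W / T).natDegree + T.natDegree ≤ W.natDegree := by
  rcases eq_or_ne (W / T) 0 with h0 | h0
  · rwa [h0, natDegree_zero, zero_add]
  have : (T * (W / T)).natDegree ≤ W.natDegree := by
    rw [show T * (W / T) = W - W % T by linear_combination (EuclideanDomain.mod_add_div W T)]
    exact (natDegree_sub_le _ _).trans (max_le le_rfl ((natDegree_mod_lt W hT.ne').le.trans hTW))
  rwa [natDegree_mul (ne_zero_of_natDegree_gt hT) h0, add_comm] at this

section Kaplansky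

variable {K Γ ι : Type*} [Field K] [LinearOrderedCommGroupWithZero Γ] (v : Valuation K Γ)
  [Preorder ι] {a : ι → K} {γ : ι → Γ}

lemma eventuallyConst_valuation_eval_of_natDegree_le_one
    (hlim : ∀ z, EventuallyConst (fun ρ => v (a ρ - z)) atTop) {T : K[X]} (hT : T.natDegree ≤ 1) :
    EventuallyConst (fun ρ => v (T.eval (a ρ))) atTop := by
  rw [eq_X_add_C_of_natDegree_le_one hT]
  rcases eq_or_ne (T.coeff 1) 0 with h | h
  · simp [h]
  refine ((hlim (-T.coeff 0 / T.coeff 1)).comp (v (T.coeff 1) * ·)).congr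
    (.of_forall fun ρ => ?_)
  simp only [Function.comp_apply, ← v.map_mul, eval_add, eval_mul, eval_C, eval_X]
  congr 1
  field_simp
  ring

variable [NoMaxOrder ι]

lemma eventuallyConst_or_eventuallyEq_of_valuation_sub {f : ι → K} {g : ι → Γ}
    (h : ∀ᶠ ρ in atTop, ∀ σ, ρ < σ → v (f σ - f ρ) = g ρ) :
    EventuallyConst (fun ρ => v (f ρ)) atTop ∨ (fun ρ => v (f ρ)) =ᶠ[atTop] g := by
  refine or_iff_not_imp_right.2 fun hne => ?_
  obtain ⟨ρ, hρ, hfg⟩ := ((not_eventually.1 hne).and_eventually h).exists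
  dsimp only at hρ
  refine eventuallyConst_iff_exists_eventuallyEq.2
    ⟨max (v (f ρ)) (g ρ), (eventually_gt_atTop ρ).mono fun σ hσ => ?_⟩
  dsimp only
  rw [← add_sub_cancel (f ρ) (f σ), v.map_add_of_distinct_val (by rwa [hfg σ hσ]), hfg σ hσ]

theorem eventuallyConst_or_eventually_eq_mul_pow (hγ : StrictAnti γ)
    (hgauge : ∀ ρ σ, ρ < σ → v (a σ - a ρ) = γ ρ) (T : K[X])
    (hder : ∀ i, EventuallyConst (fun ρ => v ((hasseDeriv (i + 1) T).eval (a ρ))) atTop) :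
    EventuallyConst (fun ρ => v (T.eval (a ρ))) atTop ∨
      ∃ e c, 0 < e ∧ e ≤ T.natDegree ∧ ∀ᶠ ρ in atTop, v (T.eval (a ρ)) = c * γ ρ ^ e := by
  choose c hc using fun i => (hder i).eventuallyEq_const
  set n := T.natDegree
  set u : ι → ι → ℕ → K := fun ρ σ i => (hasseDeriv (i + 1) T).eval (a ρ) * (a σ - a ρ) ^ (i + 1)
  have hu : ∀ᶠ ρ in atTop, ∀ σ, ρ < σ → ∀ i ∈ Finset.range n,
      v (u ρ σ i) = c i * γ ρ ^ (i + 1) :=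
    ((eventually_all_finset _).2 fun i _ => hc i).mono fun ρ hρ σ hσ i hi => by
      rw [v.map_mul, v.map_pow, show v _ = c i from hρ i hi, hgauge ρ σ hσ]
  have hT : ∀ ρ σ, T.eval (a σ) - T.eval (a ρ) = ∑ i ∈ Finset.range n, u ρ σ i := fun ρ σ => by
    rw [T.eval_eq_eval_add_sum_hasseDeriv (a ρ) (a σ), add_sub_cancel_left]
  by_cases h0 : ∀ i ∈ Finset.range n, c i = 0
  · have hzero : ∀ᶠ ρ in atTop, ∀ σ, ρ < σ → v (T.eval (a σ) - T.eval (a ρ)) = 0 :=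
      hu.mono fun ρ hρ σ hσ => by
        rw [hT, Finset.sum_eq_zero fun i hi => ?_, map_zero]
        rw [← v.zero_iff, hρ σ hσ i hi, h0 i hi, zero_mul]
    exact .inl <| (eventuallyConst_or_eventuallyEq_of_valuation_sub v hzero).elim id
      fun h => (EventuallyConst.const 0).congr h.symm
  push Not at h0
  obtain ⟨i₀, hi₀, -, hdom⟩ := exists_eventually_forall_mul_pow_lt hγ c
    (Set.injOn_of_injective (add_left_injective 1)) h0
  refine (eventuallyConst_or_eventuallyEq_of_valuation_sub v (g := fun ρ => c i₀ * γ ρ ^ (i₀ + 1))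
    ((hu.and hdom).mono fun ρ ⟨hρ, hρ'⟩ σ hσ => ?_)).imp id
    fun h => ⟨i₀ + 1, c i₀, i₀.succ_pos, Finset.mem_range.1 hi₀, h⟩
  rw [hT, v.map_sum_eq_of_lt hi₀ fun j hj => ?_, hρ σ hσ i₀ hi₀]
  obtain ⟨hjn, hji⟩ := Finset.mem_sdiff.1 hj
  rw [hρ σ hσ j hjn, hρ σ hσ i₀ hi₀]
  exact hρ' j hjn (by simpa using hji)

theorem exists_eventually_valuation_eval_eq_mul_pow (hγ : StrictAnti γ) {T : K[X]}
    (hT : 0 < T.natDegree)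
    (hlow : ∀ R : K[X], R.natDegree < T.natDegree → EventuallyConst (fun ρ => v (R.eval (a ρ))) atTop)
    {c : Γ} {e : ℕ} (he : 0 < e) (hTe : ∀ᶠ ρ in atTop, v (T.eval (a ρ)) = c * γ ρ ^ e)
    (W : K[X]) :
    ∃ t κ, t * T.natDegree ≤ W.natDegree ∧
      ∀ᶠ ρ in atTop, v (W.eval (a ρ)) = κ * γ ρ ^ (t * e) := by
  obtain ⟨d, hd⟩ : ∃ d, W.natDegree = d := ⟨_, rfl⟩
  induction d using Nat.strong_induction_on generalizing W with
  | _ d IH =>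
  obtain ⟨κR, hR⟩ := (hlow (W % T) (natDegree_mod_lt W hT.ne')).eventuallyEq_const
  replace hR : ∀ᶠ ρ in atTop, v ((W % T).eval (a ρ)) = κR := hR
  rcases lt_or_ge d T.natDegree with hdT | hTd
  · obtain ⟨κ, hκ⟩ := (hlow W (hd ▸ hdT)).eventuallyEq_const
    exact ⟨0, κ, by simp, hκ.mono fun ρ h => by simpa using h⟩
  have hW : W = W % T + T * (W / T) := (EuclideanDomain.mod_add_div W T).symm
  have hD := natDegree_div_add_natDegree_le hT (hd ▸ hTd)
  obtain ⟨t, κ, ht, hκ⟩ := IH _ (by omega) (W / T) rfl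
  have hTD : ∀ᶠ ρ in atTop,
      v ((T * (W / T)).eval (a ρ)) = c * κ * γ ρ ^ ((t + 1) * e) :=
    (hTe.and hκ).mono fun ρ ⟨h1, h2⟩ => by
      rw [eval_mul, v.map_mul, h1, h2, add_mul, one_mul, pow_add]
      ac_rfl
  have hle : (t + 1) * T.natDegree ≤ W.natDegree := by rw [hd, add_mul]; omega
  rcases eq_or_ne (c * κ) 0 with h0 | h0
  · refine ⟨0, κR, by simp, (hTD.and hR).mono fun ρ ⟨h1, h2⟩ => ?_⟩
    rw [h0, zero_mul, v.zero_iff] at h1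
    rw [hW, eval_add, h1, add_zero, h2, zero_mul, pow_zero, mul_one]
  rcases ((hγ.const_mul_pow h0 (by positivity : (t + 1) * e ≠ 0)).eventually_lt_or_eventually_gt
    κR) with hlt | hgt
  · refine ⟨0, κR, by simp, (hTD.and (hR.and hlt)).mono fun ρ ⟨h1, h2, h3⟩ => ?_⟩
    rw [hW, eval_add, v.map_add_eq_of_lt_left (by rwa [h1, h2]), h2, zero_mul, pow_zero, mul_one]
  · refine ⟨t + 1, c * κ, hle, (hTD.and (hR.and hgt)).mono fun ρ ⟨h1, h2, h3⟩ => ?_⟩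
    rw [hW, eval_add, v.map_add_eq_of_lt_right (by rwa [h1, h2]), h1]

end Kaplansky

section ArtinSchreier

variable {K Γ : Type*} [Field K] [LinearOrderedCommGroupWithZero Γ] (v : Valuation K Γ) {p : ℕ}

lemma Valuation.map_pow_sub_self_of_one_lt_s15 (hp : 1 < p) {y : K} (h : 1 < v (y ^ p - y)) :
    v (y ^ p - y) = v y ^ p := by
  have hy : 1 < v y := by
    by_contra! hy
    exact h.not_ge <| (v.map_sub _ _).trans <| max_le (v.map_pow y p ▸ pow_le_one₀ zero_le hy) hy
  rw [v.map_sub_eq_of_lt_left (by rw [v.map_pow]; exact lt_self_pow₀ hy hp), v.map_pow]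

variable [Fact p.Prime] [CharP K p]

lemma sub_pow_sub_sub_eq (x y b : K) :
    (x - y) ^ p - (x - y) = (x ^ p - x - b) - (y ^ p - y - b) := by
  rw [sub_pow_char]
  ring

variable {b : K}

lemma one_le_valuation_pow_sub_self_sub (hM : ∀ m : K, v m < 1 → ∃ x : K, x ^ p - x = m)
    (hb : ∀ x : K, x ^ p - x ≠ b) (x : K) : 1 ≤ v (x ^ p - x - b) := by
  by_contra! h
  obtain ⟨y, hy⟩ := hM _ h
  exact hb (x - y) (by rw [sub_pow_char]; linear_combination -hy)

lemma valuation_sub_pow_eq_of_lt (hM : ∀ m : K, v m < 1 → ∃ x : K, x ^ p - x = m)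
    (hb : ∀ x : K, x ^ p - x ≠ b) {x z : K} (h : v (x ^ p - x - b) < v (z ^ p - z - b)) :
    v (x - z) ^ p = v (z ^ p - z - b) := by
  have h' : v ((x - z) ^ p - (x - z)) = v (z ^ p - z - b) := by
    rw [sub_pow_sub_sub_eq (b := b), v.map_sub_eq_of_lt_right h]
  rw [← v.map_pow_sub_self_of_one_lt_s15 (Fact.out : p.Prime).one_lt
    (h' ▸ (one_le_valuation_pow_sub_self_sub v hM hb x).trans_lt h), h']

variable {ι : Type*} [LinearOrder ι] [NoMaxOrder ι] {a : ι → K}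

lemma exists_gauge (hM : ∀ m : K, v m < 1 → ∃ x : K, x ^ p - x = m)
    (hb : ∀ x : K, x ^ p - x ≠ b) (hmono : StrictAnti fun ρ => v (a ρ ^ p - a ρ - b)) :
    ∃ γ : ι → Γ, StrictAnti γ ∧ (∀ ρ σ, ρ < σ → v (a σ - a ρ) = γ ρ) ∧
      ∀ ρ, γ ρ ^ p = v (a ρ ^ p - a ρ - b) := by
  have hpow : ∀ ρ σ, ρ < σ → v (a σ - a ρ) ^ p = v (a ρ ^ p - a ρ - b) := fun ρ σ hρσ =>
    valuation_sub_pow_eq_of_lt v hM hb (hmono hρσ)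
  refine ⟨fun ρ => v (a (exists_gt ρ).choose - a ρ), fun ρ σ hρσ => ?_, fun ρ σ hρσ => ?_,
    fun ρ => hpow ρ _ (exists_gt ρ).choose_spec⟩
  · refine lt_of_pow_lt_pow_left₀ p zero_le ?_
    rw [hpow _ _ (exists_gt σ).choose_spec, hpow _ _ (exists_gt ρ).choose_spec]
    exact hmono hρσ
  · exact (pow_left_inj₀ zero_le zero_le (Fact.out : p.Prime).ne_zero).1
      ((hpow ρ σ hρσ).trans (hpow ρ _ (exists_gt ρ).choose_spec).symm)

lemma eventuallyConst_valuation_sub (hM : ∀ m : K, v m < 1 → ∃ x : K, x ^ p - x = m)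
    (hb : ∀ x : K, x ^ p - x ≠ b) (hmono : StrictAnti fun ρ => v (a ρ ^ p - a ρ - b))
    (hcof : ∀ x : K, ∃ ρ, v (a ρ ^ p - a ρ - b) ≤ v (x ^ p - x - b)) (z : K) :
    EventuallyConst (fun ρ => v (a ρ - z)) atTop := by
  obtain ⟨ρ, hρ⟩ := hcof z
  have hpow : ∀ σ, ρ < σ → v (a σ - z) ^ p = v (z ^ p - z - b) := fun σ hσ =>
    valuation_sub_pow_eq_of_lt v hM hb ((hmono hσ).trans_le hρ)
  refine eventuallyConst_iff_exists_eventuallyEq.2 ⟨v (a (exists_gt ρ).choose - z),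
    (eventually_gt_atTop ρ).mono fun σ hσ => ?_⟩
  exact (pow_left_inj₀ zero_le zero_le (Fact.out : p.Prime).ne_zero).1
    ((hpow σ hσ).trans (hpow _ (exists_gt ρ).choose_spec).symm)

theorem eventuallyConst_valuation_eval_of_natDegree_lt [Nonempty ι]
    (hM : ∀ m : K, v m < 1 → ∃ x : K, x ^ p - x = m)
    (hb : ∀ x : K, x ^ p - x ≠ b) (hmono : StrictAnti fun ρ => v (a ρ ^ p - a ρ - b))
    (hcof : ∀ x : K, ∃ ρ, v (a ρ ^ p - a ρ - b) ≤ v (x ^ p - x - b)) {T : K[X]}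
    (hT : T.natDegree < p) : EventuallyConst (fun ρ => v (T.eval (a ρ))) atTop := by
  have hp : p.Prime := Fact.out
  obtain ⟨γ, hγ, hgauge, hγp⟩ := exists_gauge v hM hb hmono
  obtain ⟨n, hn⟩ : ∃ n, T.natDegree = n := ⟨_, rfl⟩
  induction n using Nat.strong_induction_on generalizing T with
  | _ n IH =>
  rcases le_or_gt n 1 with hn1 | hn1
  · exact eventuallyConst_valuation_eval_of_natDegree_le_one v
      (eventuallyConst_valuation_sub v hM hb hmono hcof) (hn ▸ hn1)
  have hlow : ∀ R : K[X], R.natDegree < T.natDegree →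
      EventuallyConst (fun ρ => v (R.eval (a ρ))) atTop :=
    fun R hR => IH _ (hn ▸ hR) (hR.trans hT) rfl
  refine (eventuallyConst_or_eventually_eq_mul_pow v hγ hgauge T fun i =>
    hlow _ ((natDegree_hasseDeriv_le T _).trans_lt (by omega))).resolve_right ?_
  rintro ⟨e, c, he, hen, hTe⟩
  obtain ⟨t, κ, ht, hP⟩ := exists_eventually_valuation_eval_eq_mul_pow v hγ (by omega) hlow he hTe
    (X ^ p - X - C b)
  have hte : t * e = p := eq_of_eventually_mul_pow_eq_pow hγ <| hP.mono fun ρ h => by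
    rw [hγp, ← h]
    simp
  rw [natDegree_sub_C, FiniteField.X_pow_card_sub_X_natDegree_eq K hp.one_lt, hn] at ht
  -- `e` divides `p` and `e ≤ n < p`, so `e = 1` and `t = p`; then `t * n ≤ p` forces `n ≤ 1`.
  rcases hp.eq_one_or_self_of_dvd e (Dvd.intro_left t hte) with rfl | rfl
  · rw [mul_one] at hte
    subst hte
    nlinarith [hp.pos]
  · omega

end ArtinSchreier

theorem min_degree_of_increasing_valuations_general
    (p : ℕ) (hp : p.Prime) (K : Type) [Field K]
    [CharP K p]
    {Γ : Type} [LinearOrderedCommGroupWithZero Γ]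
    (v : Valuation K Γ)
    (hM : ∀ m : K, v m < 1 → ∃ x : K, x ^ p - x = m)
    (b : K) (hb : ∀ x : K, x ^ p - x ≠ b)
    {ι : Type} [LinearOrder ι] [Nonempty ι] [NoMaxOrder ι] (aseq : ι → K)
    (hmono : StrictAnti (fun ρ => v (aseq ρ ^ p - aseq ρ - b)))
    (hcof : ∀ x : K, ∃ ρ, v (aseq ρ ^ p - aseq ρ - b) ≤ v (x ^ p - x - b)) :
    ∀ P₀ : K[X],
      (∃ ρ₀, ∀ ρ σ, ρ₀ ≤ ρ → ρ < σ →
        v (P₀.eval (aseq σ)) < v (P₀.eval (aseq ρ))) →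
      p ≤ P₀.natDegree := by
  have : Fact p.Prime := ⟨hp⟩
  rintro P₀ ⟨ρ₀, hρ₀⟩
  by_contra! hdeg
  obtain ⟨ρ₁, hρ₁⟩ := eventuallyConst_atTop.1
    (eventuallyConst_valuation_eval_of_natDegree_lt v hM hb hmono hcof hdeg)
  obtain ⟨σ, hσ⟩ := exists_gt (max ρ₀ ρ₁)
  have h := hρ₀ _ σ (le_max_left _ _) hσ
  rw [hρ₁ σ ((le_max_right _ _).trans hσ.le), hρ₁ _ (le_max_right _ _)] at h
  exact lt_irrefl _ h

/-- Step 3 of the theorem: in the situation of the proof (with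
`M_v ⊆ ℘(K)`, `L = K(a)` an immediate Galois extension of degree `p` with
`a^p - a = b ∉ ℘(K)`, and `{a ρ}` the sequence chosen so that
`v (a ρ ^ p - a ρ - b)` is strictly increasing additively (`StrictAnti`
multiplicatively) and cofinal in `C = {v (x^p - x - b) | x ∈ K}`), every
polynomial `P₀` along which the valuations are ultimately strictly increasing
has degree at least `p`. -/
theorem min_degree_of_increasing_valuations
    (p : ℕ) (hp : p.Prime) (K L : Type) [Field K] [Field L] [Algebra K L]
    [CharP K p] [FiniteDimensional K L] [IsGalois K L]
    (hdeg : Module.finrank K L = p)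
    {Γ : Type} [LinearOrderedCommGroupWithZero Γ]
    (v : Valuation K Γ) (w : Valuation L Γ)
    (hext : ∀ x : K, w (algebraMap K L x) = v x)
    (himmval : ∀ y : L, y ≠ 0 → ∃ x : K, w y = v x)
    (himmres : ∀ y : L, w y ≤ 1 → ∃ x : K, v x ≤ 1 ∧ w (y - algebraMap K L x) < 1)
    (hM : ∀ m : K, v m < 1 → ∃ x : K, x ^ p - x = m)
    (a : L) (b : K) (hgen : Algebra.adjoin K {a} = ⊤)
    (hab : a ^ p - a = algebraMap K L b) (hb : ∀ x : K, x ^ p - x ≠ b)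
    {ι : Type} [LinearOrder ι] [Nonempty ι] [NoMaxOrder ι] (aseq : ι → K)
    (hmono : StrictAnti (fun ρ => v (aseq ρ ^ p - aseq ρ - b)))
    (hcof : ∀ x : K, ∃ ρ, v (aseq ρ ^ p - aseq ρ - b) ≤ v (x ^ p - x - b)) :
    ∀ P₀ : K[X],
      (∃ ρ₀, ∀ ρ σ, ρ₀ ≤ ρ → ρ < σ →
        v (P₀.eval (aseq σ)) < v (P₀.eval (aseq ρ))) →
      p ≤ P₀.natDegree :=
  min_degree_of_increasing_valuations_general p hp K v hM b hb aseq hmono hcof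
end

section
/- Let (K,v) be a valued field, {a_ρ}_{ρ<κ} a pseudo-convergent sequence of algebraic type with no pseudo-limit in K, P a monic polynomial of minimal degree such that v(P(a_ρ)) is ultimately strictly increasing, and a_∞ a root of P in an algebraic closure. Then there is a valuation v' on K(a_∞) extending v such that (K(a_∞), v') is an immediate extension of (K,v) and a_∞ is a pseudo-limit of {a_ρ}. -/
/-!
Values are written multiplicatively, so Kaplansky's "ultimately increasing" reads "eventually
strictly decreasing" here. Let `γ ρ` be the common value of `v (a σ - a ρ)` for `σ > ρ`. By the
Taylor expansion `Q (a σ) - Q (a ρ) = ∑ Dᵢ Q (a ρ) (a σ - a ρ) ^ i`, whose terms eventually have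
distinct values `cᵢ γ ρ ^ i`, and induction on the degree, `v (Q (a ρ))` is ultimately constant for
every `Q` of degree `< deg P` (it cannot ultimately decrease, by minimality of `P`), and
`v (Q (a σ) - Q (a ρ))` is ultimately a strictly decreasing function of `ρ`. A factorisation of `P`
into factors of lower degree would make `v (P (a ρ))` ultimately constant, so `P` is irreducible and
`K(a_∞) = K[X]/(P)`. Giving `Q(a_∞)` the ultimate value of `v (Q (a ρ))` is multiplicative because
`Q₁ Q₂` and its remainder modulo `P` differ by a multiple of `P`, whose value strictly decreases.
The extension is immediate since `Q(a_∞)` is approximated by `Q (a ρ) ∈ K` with strictly decreasing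
errors, and `v' (a_∞ - a ρ) = γ ρ`.
-/

open Polynomial Filter

theorem Polynomial.eval_sub_eval_eq_sum_hasseDeriv {R : Type*} [CommRing R] (Q : R[X]) (x y : R) :
    Q.eval y - Q.eval x =
      ∑ i ∈ Finset.range Q.natDegree, (hasseDeriv (i + 1) Q).eval x * (y - x) ^ (i + 1) := by
  conv_lhs => rw [← taylor_eval_sub x Q y]
  rw [eval_eq_sum_range, natDegree_taylor, Finset.sum_range_succ']
  simp only [taylor_coeff, pow_zero, mul_one, hasseDeriv_zero, LinearMap.id_coe, id_eq]
  rw [add_sub_cancel_right]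

theorem Valuation.map_sum_eq_sup' {R Γ κ : Type*} [Ring R] [LinearOrderedCommGroupWithZero Γ]
    (v : Valuation R Γ) {s : Finset κ} (hs : s.Nonempty) {f : κ → R}
    (hf : ∀ i ∈ s, ∀ j ∈ s, v (f i) = v (f j) → v (f i) = 0 ∨ i = j) :
    v (∑ i ∈ s, f i) = s.sup' hs fun i => v (f i) := by
  classical
  obtain ⟨j, hj, hmax⟩ := Finset.exists_mem_eq_sup' hs fun i => v (f i)
  rw [hmax]
  rcases eq_or_ne (v (f j)) 0 with h0 | h0
  · rw [h0]
    exact le_antisymm (v.map_sum_le fun i hi => h0 ▸ hmax ▸ s.le_sup' (fun i => v (f i)) hi)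
      zero_le
  · refine v.map_sum_eq_of_lt hj fun i hi => ?_
    obtain ⟨his, hij⟩ := Finset.mem_sdiff.mp hi
    refine (hmax ▸ s.le_sup' (fun i => v (f i)) his).lt_of_ne fun h => ?_
    rcases hf i his j hj h with h' | h'
    · exact h0 (h ▸ h')
    · exact hij (Finset.mem_singleton.mpr h')

theorem Valuation.map_eq_of_map_sub_lt {K L Γ : Type*} [CommRing K] [Ring L] [Algebra K L]
    [LinearOrderedCommGroupWithZero Γ] {v : Valuation K Γ} {w : Valuation L Γ}
    (hw : ∀ x, w (algebraMap K L x) = v x) {y : L} {x : K} (h : w (y - algebraMap K L x) < w y) :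
    w y = v x := by
  rw [← hw, ← w.map_sub_eq_of_lt_left h, sub_sub_cancel]

namespace IsAdjoinRootMonic

variable {R S : Type*} [CommRing R] [Ring S] [Algebra R S] {f : R[X]} (h : IsAdjoinRootMonic S f)

theorem natDegree_modByMonicHom_lt (hf : f ≠ 1) (z : S) :
    (h.modByMonicHom z).natDegree < f.natDegree :=
  natDegree_modByMonic_lt _ h.monic hf

theorem modByMonicHom_map_of_natDegree_lt [Nontrivial R] {g : R[X]}
    (hg : g.natDegree < f.natDegree) : h.modByMonicHom (h.map g) = g := by
  rw [h.modByMonicHom_map, modByMonic_eq_self_iff h.monic]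
  exact degree_lt_degree hg

end IsAdjoinRootMonic

section

variable {ι : Type*} [LinearOrder ι]

section Eventually

variable {α : Type*}

def EventuallyStrictAnti [Preorder α] (f : ι → α) : Prop :=
  ∃ ρ₀, ∀ ρ σ, ρ₀ ≤ ρ → ρ < σ → f σ < f ρ

theorem noMaxOrder_of_not_eventuallyStrictAnti [Preorder α] {f : ι → α}
    (hf : ¬EventuallyStrictAnti f) : NoMaxOrder ι := by
  refine ⟨fun ρ => ?_⟩
  by_contra! hρ
  exact hf ⟨ρ, fun ρ' σ hρ' hσ => (hσ.trans_le ((hρ σ).trans hρ')).false.elim⟩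

theorem EventuallyStrictAnti.not_eventuallyConst [Preorder α] [NoMaxOrder ι] {f : ι → α}
    (hf : EventuallyStrictAnti f) : ¬EventuallyConst f atTop := by
  obtain ⟨ρ₀, hρ₀⟩ := hf
  have : Nonempty ι := ⟨ρ₀⟩
  rintro hc
  obtain ⟨ρ₁, hρ₁⟩ := eventuallyConst_atTop.mp hc
  obtain ⟨σ, hσ⟩ := exists_gt (max ρ₀ ρ₁)
  have := hρ₀ _ σ (le_max_left ρ₀ ρ₁) hσ
  rw [hρ₁ σ (le_max_right ρ₀ ρ₁ |>.trans hσ.le), hρ₁ _ (le_max_right ρ₀ ρ₁)] at this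
  exact this.false

theorem EventuallyStrictAnti.mul_of_eventually_eq {Γ : Type*} [LinearOrderedCommGroupWithZero Γ]
    {f g : ι → Γ} (hf : EventuallyStrictAnti f) {c : Γ} (hc : c ≠ 0)
    (hg : ∀ᶠ ρ in atTop, g ρ = c) : EventuallyStrictAnti (f * g) := by
  obtain ⟨ρ₀, hρ₀⟩ := hf
  have : Nonempty ι := ⟨ρ₀⟩
  obtain ⟨ρ₁, hρ₁⟩ := eventually_atTop.mp hg
  refine ⟨max ρ₀ ρ₁, fun ρ σ hρ hσ => ?_⟩
  have hρ₁ρ : ρ₁ ≤ ρ := le_of_max_le_right hρ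
  simp only [Pi.mul_apply, hρ₁ ρ hρ₁ρ, hρ₁ σ (hρ₁ρ.trans hσ.le)]
  exact mul_lt_mul_of_pos_right (hρ₀ ρ σ (le_of_max_le_left hρ) hσ) (zero_lt_iff.mpr hc)

/-- The ultimate value of `f`, meaningful when `f` is eventually constant. -/
noncomputable def ultVal [Nonempty α] (f : ι → α) : α :=
  Classical.epsilon fun c => ∀ᶠ ρ in atTop, f ρ = c

theorem Filter.EventuallyConst.eventually_eq_ultVal [Nonempty α] {f : ι → α}
    (hf : EventuallyConst f atTop) : ∀ᶠ ρ in atTop, f ρ = ultVal f :=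
  Classical.epsilon_spec (eventuallyConst_iff_exists_eventuallyEq.mp hf)

theorem ultVal_eq [Nonempty α] [Nonempty ι] {f : ι → α} {c : α} (hf : ∀ᶠ ρ in atTop, f ρ = c) :
    ultVal f = c := by
  have hc : EventuallyConst f atTop := eventuallyConst_iff_exists_eventuallyEq.mpr ⟨c, hf⟩
  obtain ⟨ρ, h₁, h₂⟩ := (hc.eventually_eq_ultVal.and hf).exists
  exact h₁.symm.trans h₂

theorem ultVal_mul [MulZeroClass α] [Nonempty ι] {f g : ι → α} (hf : EventuallyConst f atTop)
    (hg : EventuallyConst g atTop) : ultVal (f * g) = ultVal f * ultVal g :=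
  ultVal_eq <| hf.eventually_eq_ultVal.mp <| hg.eventually_eq_ultVal.mono fun _ hg hf => by
    rw [Pi.mul_apply, hf, hg]

end Eventually

section Valuation

variable {R Γ : Type*} [Ring R] [LinearOrderedCommGroupWithZero Γ] (v : Valuation R Γ)

theorem Valuation.eventuallyConst_or_eventuallyStrictAnti [NoMaxOrder ι] [Nonempty ι]
    {F : ι → R} {M : ι → Γ} (hM : StrictAnti M)
    (hF : ∀ᶠ ρ in atTop, ∀ σ, ρ < σ → v (F σ - F ρ) = M ρ) :
    EventuallyConst (fun ρ => v (F ρ)) atTop ∨ EventuallyStrictAnti fun ρ => v (F ρ) := by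
  obtain ⟨ρ₀, hρ₀⟩ := eventually_atTop.mp hF
  by_cases h : ∃ ρ₁, ρ₀ ≤ ρ₁ ∧ v (F ρ₁) ≠ M ρ₁
  · obtain ⟨ρ₁, h₀₁, hne⟩ := h
    refine .inl <| eventuallyConst_iff_exists_eventuallyEq.mpr ⟨max (v (F ρ₁)) (M ρ₁), ?_⟩
    filter_upwards [eventually_gt_atTop ρ₁] with σ hσ
    rw [← add_sub_cancel (F ρ₁) (F σ), v.map_add_of_distinct_val, hρ₀ ρ₁ h₀₁ σ hσ]
    rwa [hρ₀ ρ₁ h₀₁ σ hσ]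
  · push Not at h
    refine .inr ⟨ρ₀, fun ρ σ hρ hσ => ?_⟩
    dsimp only
    rw [h ρ hρ, h σ (hρ.trans hσ.le)]
    exact hM hσ

theorem Valuation.eq_of_eventuallyStrictAnti_sub [NoMaxOrder ι] {F G : ι → R} {c d : Γ}
    (hF : ∀ᶠ ρ in atTop, v (F ρ) = c) (hG : ∀ᶠ ρ in atTop, v (G ρ) = d)
    (hFG : EventuallyStrictAnti fun ρ => v (F ρ - G ρ)) : c = d := by
  by_contra hcd
  refine hFG.not_eventuallyConst (eventuallyConst_iff_exists_eventuallyEq.mpr ⟨max c d, ?_⟩)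
  filter_upwards [hF, hG] with ρ hFρ hGρ
  rw [sub_eq_add_neg, v.map_add_of_distinct_val, v.map_neg, hFρ, hGρ]
  rwa [v.map_neg, hFρ, hGρ]

end Valuation

section StrictAnti

variable {Γ : Type*} [LinearOrderedCommGroupWithZero Γ] {γ : ι → Γ}

theorem StrictAnti.eventually_mul_pow_eq_imp [NoMaxOrder ι] (hγ : StrictAnti γ) (c d : Γ)
    {i j : ℕ} (hij : i < j) : ∀ᶠ ρ in atTop, c * γ ρ ^ i = d * γ ρ ^ j → d = 0 := by
  rcases eq_or_ne d 0 with rfl | hd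
  · exact .of_forall fun _ _ => rfl
  have hg : StrictAnti fun ρ => d * γ ρ ^ (j - i) := fun ρ σ h =>
    mul_lt_mul_of_pos_left (pow_lt_pow_left₀ (hγ h) zero_le (by omega)) (zero_lt_iff.mpr hd)
  filter_upwards [atTop_le_cofinite
    ((Set.finite_singleton c).preimage hg.injective.injOn).compl_mem_cofinite] with ρ hρ heq
  refine absurd ?_ hρ
  change d * γ ρ ^ (j - i) = c
  have hγρ : γ ρ ≠ 0 := (zero_le.trans_lt (hγ (exists_gt ρ).choose_spec)).ne'
  apply mul_right_cancel₀ (pow_ne_zero i hγρ)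
  rw [heq, mul_assoc, ← pow_add, Nat.sub_add_cancel hij.le]

theorem StrictAnti.sup'_mul_pow (hγ : StrictAnti γ) {s : Finset ℕ} (hs : s.Nonempty)
    {c : ℕ → Γ} {j : ℕ} (hj : j ∈ s) (hcj : c j ≠ 0) :
    StrictAnti fun ρ => s.sup' hs fun i => c i * γ ρ ^ (i + 1) := by
  intro ρ σ h
  have hγρ : 0 < γ ρ := zero_le.trans_lt (hγ h)
  refine (Finset.sup'_lt_iff hs).mpr fun i hi => ?_
  rcases eq_or_ne (c i) 0 with hci | hci
  · rw [hci, zero_mul]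
    exact (mul_pos (zero_lt_iff.mpr hcj) (pow_pos hγρ _)).trans_le
      (s.le_sup' (fun i => c i * γ ρ ^ (i + 1)) hj)
  · exact (mul_lt_mul_of_pos_left (pow_lt_pow_left₀ (hγ h) zero_le i.succ_ne_zero)
      (zero_lt_iff.mpr hci)).trans_le (s.le_sup' (fun i => c i * γ ρ ^ (i + 1)) hi)

end StrictAnti

section PseudoConvergent

variable {R Γ : Type*} [CommRing R] [LinearOrderedCommGroupWithZero Γ]

def IsPseudoConvergent (v : Valuation R Γ) (a : ι → R) : Prop :=
  ∀ ρ σ τ, ρ < σ → σ < τ → v (a τ - a σ) < v (a σ - a ρ)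

variable {v : Valuation R Γ} {a : ι → R}

namespace IsPseudoConvergent

theorem map_sub_eq (ha : IsPseudoConvergent v a) {ρ σ τ : ι} (hσ : ρ < σ) (hτ : ρ < τ) :
    v (a σ - a ρ) = v (a τ - a ρ) := by
  have key : ∀ {σ τ}, ρ < σ → σ < τ → v (a τ - a ρ) = v (a σ - a ρ) := fun {σ τ} hσ hστ => by
    rw [← sub_add_sub_cancel (a τ) (a σ) (a ρ), v.map_add_eq_of_lt_right (ha _ _ _ hσ hστ)]
  rcases lt_trichotomy σ τ with h | rfl | h
  · exact (key hσ h).symm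
  · rfl
  · exact key hτ h

variable [NoMaxOrder ι]

variable (v a) in
/-- The common value of `v (a σ - a ρ)` for all `σ > ρ`. -/
noncomputable def gauge (ρ : ι) : Γ :=
  v (a (exists_gt ρ).choose - a ρ)

theorem map_sub_eq_gauge (ha : IsPseudoConvergent v a) {ρ σ : ι} (h : ρ < σ) :
    v (a σ - a ρ) = gauge v a ρ :=
  ha.map_sub_eq h (exists_gt ρ).choose_spec

theorem gauge_strictAnti (ha : IsPseudoConvergent v a) : StrictAnti (gauge v a) := fun ρ σ h => by
  have hσ := (exists_gt σ).choose_spec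
  rw [← ha.map_sub_eq_gauge h, ← ha.map_sub_eq_gauge hσ]
  exact ha _ _ _ h hσ

theorem gauge_pos (ha : IsPseudoConvergent v a) (ρ : ι) : 0 < gauge v a ρ :=
  zero_le.trans_lt (ha.gauge_strictAnti (exists_gt ρ).choose_spec)

theorem injective (ha : IsPseudoConvergent v a) : Function.Injective a :=
  Function.Injective.of_lt_imp_ne fun ρ σ h heq => (ha.gauge_pos ρ).ne' <| by
    rw [← ha.map_sub_eq_gauge h, heq, sub_self, map_zero]

end IsPseudoConvergent

end PseudoConvergent

namespace IsPseudoConvergent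

variable {K Γ : Type*} [Field K] [LinearOrderedCommGroupWithZero Γ] {v : Valuation K Γ}
  {a : ι → K} [NoMaxOrder ι]

theorem eventually_eval_ne_zero (ha : IsPseudoConvergent v a) {Q : K[X]} (hQ : Q ≠ 0) :
    ∀ᶠ ρ in atTop, Q.eval (a ρ) ≠ 0 :=
  atTop_le_cofinite ((finite_setOfPred_isRoot hQ).preimage ha.injective.injOn).compl_mem_cofinite

variable [Nonempty ι]

/-- In the Taylor expansion `Q (a σ) - Q (a ρ) = ∑ Dᵢ Q (a ρ) (a σ - a ρ) ^ i` the terms eventually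
have pairwise distinct values `cᵢ γ ρ ^ i`, so `M ρ = maxᵢ cᵢ γ ρ ^ i`. -/
theorem exists_strictAnti_map_eval_sub (ha : IsPseudoConvergent v a) {Q : K[X]}
    (hQ : 0 < Q.natDegree)
    (hder : ∀ i, 0 < i → EventuallyConst (fun ρ => v ((hasseDeriv i Q).eval (a ρ))) atTop) :
    ∃ M : ι → Γ, StrictAnti M ∧
      ∀ᶠ ρ in atTop, ∀ σ, ρ < σ → v (Q.eval (a σ) - Q.eval (a ρ)) = M ρ := by
  set m := Q.natDegree
  set c : ℕ → Γ := fun i => ultVal fun ρ => v ((hasseDeriv (i + 1) Q).eval (a ρ))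
  set γ := gauge v a
  have hs : (Finset.range m).Nonempty := Finset.nonempty_range_iff.mpr hQ.ne'
  have hcm : c (m - 1) = v Q.leadingCoeff := ultVal_eq <| .of_forall fun ρ => by
    rw [Nat.sub_add_cancel hQ, hasseDeriv_natDegree_eq_C, eval_C]
  refine ⟨fun ρ => (Finset.range m).sup' hs fun i => c i * γ ρ ^ (i + 1),
    ha.gauge_strictAnti.sup'_mul_pow hs (Finset.mem_range.mpr (Nat.sub_lt hQ one_pos))
      (hcm ▸ v.ne_zero_iff.mpr (leadingCoeff_ne_zero.mpr (ne_zero_of_natDegree_gt hQ))), ?_⟩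
  have hval : ∀ᶠ ρ in atTop, ∀ i ∈ Finset.range m,
      v ((hasseDeriv (i + 1) Q).eval (a ρ)) = c i :=
    (eventually_all_finset _).mpr fun i _ => (hder (i + 1) i.succ_pos).eventually_eq_ultVal
  have hdist : ∀ᶠ ρ in atTop, ∀ i ∈ Finset.range m, ∀ j ∈ Finset.range m,
      c i * γ ρ ^ (i + 1) = c j * γ ρ ^ (j + 1) → c i * γ ρ ^ (i + 1) = 0 ∨ i = j := by
    simp only [eventually_all_finset]
    intro i _ j _
    rcases lt_trichotomy i j with h | rfl | h
    · filter_upwards [ha.gauge_strictAnti.eventually_mul_pow_eq_imp (c i) (c j)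
        (Nat.succ_lt_succ h)] with ρ hρ heq
      exact .inl (by rw [heq, hρ heq, zero_mul])
    · exact .of_forall fun _ _ => .inr rfl
    · filter_upwards [ha.gauge_strictAnti.eventually_mul_pow_eq_imp (c j) (c i)
        (Nat.succ_lt_succ h)] with ρ hρ heq
      exact .inl (by rw [hρ heq.symm, zero_mul])
  filter_upwards [hval, hdist] with ρ hvalρ hdistρ σ hσ
  have hterm : ∀ i ∈ Finset.range m,
      v ((hasseDeriv (i + 1) Q).eval (a ρ) * (a σ - a ρ) ^ (i + 1)) = c i * γ ρ ^ (i + 1) :=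
    fun i hi => by rw [map_mul, map_pow, hvalρ i hi, ha.map_sub_eq_gauge hσ]
  rw [eval_sub_eval_eq_sum_hasseDeriv, v.map_sum_eq_sup' hs]
  · exact Finset.sup'_congr hs rfl hterm
  · intro i hi j hj h
    rw [hterm i hi, hterm j hj] at h
    rw [hterm i hi]
    exact hdistρ i hi j hj h

theorem eventuallyConst_of_natDegree_lt (ha : IsPseudoConvergent v a) {n : ℕ}
    (hmin : ∀ Q : K[X], Q ≠ 0 → Q.natDegree < n →
      ¬EventuallyStrictAnti fun ρ => v (Q.eval (a ρ)))
    (Q : K[X]) (hQn : Q.natDegree < n) : EventuallyConst (fun ρ => v (Q.eval (a ρ))) atTop := by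
  induction hd : Q.natDegree using Nat.strong_induction_on generalizing Q with
  | _ d ih =>
  rcases Nat.eq_zero_or_pos d with rfl | hd0
  · obtain ⟨x, rfl⟩ := natDegree_eq_zero.mp hd
    simpa only [eval_C] using EventuallyConst.const (v x)
  · have hder (i : ℕ) (hi : 0 < i) :
        EventuallyConst (fun ρ => v ((hasseDeriv i Q).eval (a ρ))) atTop :=
      have hlt : (hasseDeriv i Q).natDegree < d := (natDegree_hasseDeriv_le Q i).trans_lt (by omega)
      ih _ hlt _ (hlt.trans (hd ▸ hQn)) rfl
    obtain ⟨M, hM, hQM⟩ := ha.exists_strictAnti_map_eval_sub (by omega) hder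
    refine (v.eventuallyConst_or_eventuallyStrictAnti hM hQM).resolve_right (hmin Q ?_ hQn)
    rintro rfl
    rw [natDegree_zero] at hd
    omega

end IsPseudoConvergent

section MinimalPolynomial

variable {K Γ : Type*} [Field K] [LinearOrderedCommGroupWithZero Γ]
  {v : Valuation K Γ} {a : ι → K} [NoMaxOrder ι] {P : K[X]}

theorem ne_one_of_eventuallyStrictAnti (hP : EventuallyStrictAnti fun ρ => v (P.eval (a ρ))) :
    P ≠ 1 := by
  rintro rfl
  exact hP.not_eventuallyConst
    (by simpa only [eval_one, map_one] using EventuallyConst.const (1 : Γ))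

theorem one_lt_natDegree_of_eventuallyStrictAnti (hmonic : P.Monic)
    (hP : EventuallyStrictAnti fun ρ => v (P.eval (a ρ)))
    (hnolim : ∀ l : K, ¬EventuallyStrictAnti fun ρ => v (l - a ρ)) : 1 < P.natDegree := by
  by_contra! h
  interval_cases hdeg : P.natDegree
  · exact ne_one_of_eventuallyStrictAnti hP (hmonic.natDegree_eq_zero.mp hdeg)
  · refine hnolim (-P.coeff 0) ?_
    have hval (ρ : ι) : v (-P.coeff 0 - a ρ) = v (P.eval (a ρ)) := by
      conv_rhs => rw [hmonic.eq_X_add_C hdeg]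
      rw [← v.map_neg, eval_add, eval_X, eval_C, neg_sub, sub_neg_eq_add]
    simpa only [hval] using hP

theorem irreducible_of_eventuallyStrictAnti (hmonic : P.Monic)
    (hP : EventuallyStrictAnti fun ρ => v (P.eval (a ρ)))
    (hult : ∀ Q : K[X], Q.natDegree < P.natDegree →
      EventuallyConst (fun ρ => v (Q.eval (a ρ))) atTop) :
    Irreducible P := by
  refine hmonic.irreducible_iff_natDegree.mpr
    ⟨ne_one_of_eventuallyStrictAnti hP, fun f g hf hg hfg => ?_⟩
  by_contra! h
  have hdeg := hf.natDegree_mul hg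
  rw [hfg] at hdeg
  refine hP.not_eventuallyConst ?_
  simp only [← hfg, eval_mul, map_mul]
  exact (hult f (by omega)).mul (hult g (by omega))

variable [Nonempty ι]

theorem IsPseudoConvergent.ultVal_eval_modByMonic (ha : IsPseudoConvergent v a) (hmonic : P.Monic)
    (hP : EventuallyStrictAnti fun ρ => v (P.eval (a ρ)))
    (hult : ∀ Q : K[X], Q.natDegree < P.natDegree →
      EventuallyConst (fun ρ => v (Q.eval (a ρ))) atTop)
    {F : K[X]} (hF : EventuallyConst (fun ρ => v (F.eval (a ρ))) atTop)
    (hdiv : (F /ₘ P).natDegree < P.natDegree) :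
    ultVal (fun ρ => v ((F %ₘ P).eval (a ρ))) = ultVal fun ρ => v (F.eval (a ρ)) := by
  rcases eq_or_ne (F /ₘ P) 0 with hS | hS
  · rw [(modByMonic_eq_self_iff hmonic).mpr ((divByMonic_eq_zero_iff hmonic).mp hS)]
  have hSval := (hult _ hdiv).eventually_eq_ultVal
  have hS0 : ultVal (fun ρ => v ((F /ₘ P).eval (a ρ))) ≠ 0 := by
    obtain ⟨ρ, h₁, h₂⟩ := (hSval.and (ha.eventually_eval_ne_zero hS)).exists
    exact h₁ ▸ v.ne_zero_iff.mpr h₂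
  have hsub (x : K) : (F %ₘ P).eval x - F.eval x = -(P.eval x * (F /ₘ P).eval x) := by
    have := congrArg (eval x) (modByMonic_add_div F P)
    rw [eval_add, eval_mul] at this
    linear_combination this
  have hmod := hult _ (natDegree_modByMonic_lt F hmonic (ne_one_of_eventuallyStrictAnti hP))
  refine v.eq_of_eventuallyStrictAnti_sub hmod.eventually_eq_ultVal hF.eventually_eq_ultVal ?_
  simp only [hsub, Valuation.map_neg, map_mul]
  exact hP.mul_of_eventually_eq hS0 hSval

end MinimalPolynomial

section KaplanskyValuation

variable {K Γ S : Type*} [Field K] [LinearOrderedCommGroupWithZero Γ] [CommRing S] [Algebra K S]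
  {v : Valuation K Γ} {a : ι → K} [NoMaxOrder ι] [Nonempty ι] {P : K[X]}
  (ha : IsPseudoConvergent v a) (h : IsAdjoinRootMonic S P)
  (hP : EventuallyStrictAnti fun ρ => v (P.eval (a ρ)))
  (hult : ∀ Q : K[X], Q.natDegree < P.natDegree →
    EventuallyConst (fun ρ => v (Q.eval (a ρ))) atTop)

/-- Kaplansky's `v'`: an element of `S = K[X]/(P)`, represented by `Q` of degree `< deg P`,
gets the ultimate value of `v (Q (a ρ))`. -/
noncomputable def kaplanskyValuation : Valuation S Γ where
  toFun z := ultVal fun ρ => v ((h.modByMonicHom z).eval (a ρ))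
  map_zero' := by simpa only [map_zero, eval_zero] using ultVal_eq (.of_forall fun _ => rfl)
  map_one' := by
    have hP1 := ne_one_of_eventuallyStrictAnti hP
    rw [← map_one h.map, h.modByMonicHom_map_of_natDegree_lt (by
      rwa [natDegree_one, h.monic.natDegree_pos])]
    simpa only [eval_one, map_one] using ultVal_eq (.of_forall fun _ => rfl)
  map_mul' z₁ z₂ := by
    have hP1 := ne_one_of_eventuallyStrictAnti hP
    have hQ₁ := h.natDegree_modByMonicHom_lt hP1 z₁
    have hQ₂ := h.natDegree_modByMonicHom_lt hP1 z₂
    have hmul : h.modByMonicHom (z₁ * z₂) =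
        (h.modByMonicHom z₁ * h.modByMonicHom z₂) %ₘ P := by
      rw [← h.modByMonicHom_map, map_mul h.map, h.map_modByMonicHom, h.map_modByMonicHom]
    have hdiv : ((h.modByMonicHom z₁ * h.modByMonicHom z₂) /ₘ P).natDegree < P.natDegree := by
      rw [natDegree_divByMonic _ h.monic]
      have := natDegree_mul_le (p := h.modByMonicHom z₁) (q := h.modByMonicHom z₂)
      omega
    have hprod : EventuallyConst (fun ρ =>
        v ((h.modByMonicHom z₁ * h.modByMonicHom z₂).eval (a ρ))) atTop := by
      simp only [eval_mul, map_mul]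
      exact (hult _ hQ₁).mul (hult _ hQ₂)
    change ultVal _ = ultVal _ * ultVal _
    rw [hmul, ha.ultVal_eval_modByMonic h.monic hP hult hprod hdiv]
    simp only [eval_mul, map_mul]
    exact ultVal_mul (hult _ hQ₁) (hult _ hQ₂)
  map_add_le_max' z₁ z₂ := by
    have hult' (z : S) := (hult _ (h.natDegree_modByMonicHom_lt
      (ne_one_of_eventuallyStrictAnti hP) z)).eventually_eq_ultVal
    obtain ⟨ρ, h₁₂, h₁, h₂⟩ := ((hult' (z₁ + z₂)).and ((hult' z₁).and (hult' z₂))).exists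
    change ultVal _ ≤ max (ultVal _) (ultVal _)
    rw [← h₁₂, ← h₁, ← h₂, map_add, eval_add]
    exact v.map_add _ _

theorem kaplanskyValuation_map {Q : K[X]} (hQ : Q.natDegree < P.natDegree) :
    kaplanskyValuation ha h hP hult (h.map Q) = ultVal fun ρ => v (Q.eval (a ρ)) := by
  change ultVal _ = _
  rw [h.modByMonicHom_map_of_natDegree_lt hQ]

theorem kaplanskyValuation_algebraMap (x : K) :
    kaplanskyValuation ha h hP hult (algebraMap K S x) = v x := by
  rw [h.algebraMap_apply, kaplanskyValuation_map ha h hP hult]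
  · simpa only [eval_C] using ultVal_eq (.of_forall fun _ => rfl)
  · rw [natDegree_C, h.monic.natDegree_pos]
    exact ne_one_of_eventuallyStrictAnti hP

theorem kaplanskyValuation_root_sub_algebraMap (hdeg : 1 < P.natDegree) (ρ : ι) :
    kaplanskyValuation ha h hP hult (h.root - algebraMap K S (a ρ)) =
      IsPseudoConvergent.gauge v a ρ := by
  rw [h.algebraMap_apply, ← h.map_X, ← map_sub,
    kaplanskyValuation_map ha h hP hult (by rwa [natDegree_X_sub_C])]
  refine ultVal_eq ?_
  filter_upwards [eventually_gt_atTop ρ] with σ hσ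
  rw [eval_sub, eval_X, eval_C, ha.map_sub_eq_gauge hσ]

/-- Writing `z = Q(a_∞)`, the errors `v' (z - Q (a ρ))` eventually strictly decrease and are at
most `v' z`. -/
theorem exists_kaplanskyValuation_sub_lt (z : S) :
    ∃ x : K, z = algebraMap K S x ∨
      kaplanskyValuation ha h hP hult (z - algebraMap K S x) <
        kaplanskyValuation ha h hP hult z := by
  set w := kaplanskyValuation ha h hP hult
  obtain ⟨Q, hQ, rfl⟩ : ∃ Q : K[X], Q.natDegree < P.natDegree ∧ h.map Q = z :=
    ⟨_, h.natDegree_modByMonicHom_lt (ne_one_of_eventuallyStrictAnti hP) z, h.map_modByMonicHom z⟩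
  rcases Nat.eq_zero_or_pos Q.natDegree with hQ0 | hQ0
  · obtain ⟨x, rfl⟩ := natDegree_eq_zero.mp hQ0
    exact ⟨x, .inl (h.algebraMap_apply x).symm⟩
  obtain ⟨M, hM, hQM⟩ := ha.exists_strictAnti_map_eval_sub hQ0 fun i _ =>
    hult _ ((natDegree_hasseDeriv_le Q i).trans_lt (by omega))
  have hsub : ∀ᶠ ρ in atTop, w (h.map Q - algebraMap K S (Q.eval (a ρ))) = M ρ ∧
      v (Q.eval (a ρ)) = w (h.map Q) := by
    rw [kaplanskyValuation_map ha h hP hult hQ]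
    filter_upwards [hQM, (hult Q hQ).eventually_eq_ultVal] with ρ hρ hQρ
    refine ⟨?_, hQρ⟩
    rw [h.algebraMap_apply, ← map_sub,
      kaplanskyValuation_map ha h hP hult (natDegree_sub_C.trans_lt hQ)]
    refine ultVal_eq ?_
    filter_upwards [eventually_gt_atTop ρ] with σ hσ
    rw [eval_sub, eval_C, hρ σ hσ]
  obtain ⟨ρ, hρ⟩ := hsub.exists
  obtain ⟨σ, hσ, hρσ⟩ := (hsub.and (eventually_gt_atTop ρ)).exists
  refine ⟨Q.eval (a σ), .inr ?_⟩
  calc w (h.map Q - algebraMap K S (Q.eval (a σ))) = M σ := hσ.1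
    _ < M ρ := hM hρσ
    _ = w (h.map Q - algebraMap K S (Q.eval (a ρ))) := hρ.1.symm
    _ ≤ max (w (h.map Q)) (w (algebraMap K S (Q.eval (a ρ)))) := w.map_sub _ _
    _ = w (h.map Q) := by rw [kaplanskyValuation_algebraMap, hρ.2, max_self]

end KaplanskyValuation

end

/-- Kaplansky's Theorem 3: if `{a ρ}` is a pseudo-convergent sequence of
algebraic type with no pseudo-limit in `K`, `P` is a monic polynomial of
minimal degree whose values `v (P (a ρ))` are ultimately strictly increasing
(additively; `StrictAnti`-like multiplicatively), and `aInf` generates a field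
extension `L = K(aInf)` with `P(aInf) = 0`, then there is a valuation `w` on `L`
extending `v` making `(L, w)/(K, v)` an immediate extension, with `aInf` a
pseudo-limit of `{a ρ}`. -/
theorem kaplansky_algebraic_type_immediate_extension
    (K : Type) [Field K]
    {Γ : Type} [LinearOrderedCommGroupWithZero Γ] (v : Valuation K Γ)
    {ι : Type} [LinearOrder ι] (a : ι → K)
    (hpc : ∀ α β γ, α < β → β < γ → v (a γ - a β) < v (a β - a α))
    (hnolim : ∀ l : K, ¬ ∃ ρ₀, ∀ ρ σ, ρ₀ ≤ ρ → ρ < σ → v (l - a σ) < v (l - a ρ))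
    (P : K[X]) (hmonic : P.Monic)
    (hP : ∃ ρ₀, ∀ ρ σ, ρ₀ ≤ ρ → ρ < σ → v (P.eval (a σ)) < v (P.eval (a ρ)))
    (hmin : ∀ Q : K[X], Q ≠ 0 → Q.natDegree < P.natDegree →
      ¬ ∃ ρ₀, ∀ ρ σ, ρ₀ ≤ ρ → ρ < σ → v (Q.eval (a σ)) < v (Q.eval (a ρ)))
    (L : Type) [Field L] [Algebra K L] (aInf : L)
    (hgen : Algebra.adjoin K {aInf} = ⊤) (hroot : Polynomial.aeval aInf P = 0) :
    ∃ w : Valuation L Γ,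
      (∀ x : K, w (algebraMap K L x) = v x) ∧
      (∀ y : L, y ≠ 0 → ∃ x : K, w y = v x) ∧
      (∀ y : L, w y ≤ 1 → ∃ x : K, v x ≤ 1 ∧ w (y - algebraMap K L x) < 1) ∧
      (∀ ρ σ, ρ < σ → w (aInf - algebraMap K L (a σ)) < w (aInf - algebraMap K L (a ρ))) := by
  have : Nonempty ι := hP.elim fun ρ _ => ⟨ρ⟩
  have : NoMaxOrder ι := noMaxOrder_of_not_eventuallyStrictAnti (hnolim 0)
  have ha : IsPseudoConvergent v a := hpc
  have hdeg := one_lt_natDegree_of_eventuallyStrictAnti hmonic hP hnolim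
  have hult := ha.eventuallyConst_of_natDegree_lt hmin
  obtain rfl := minpoly.eq_of_irreducible_of_monic
    (irreducible_of_eventuallyStrictAnti hmonic hP hult) hroot hmonic
  have hint : IsIntegral K aInf := ⟨_, hmonic, hroot⟩
  let h := IsAdjoinRootMonic.mkOfAdjoinEqTop hint hgen
  have hw := kaplanskyValuation_algebraMap ha h hP hult
  refine ⟨kaplanskyValuation ha h hP hult, hw, fun y _ => ?_, fun y hy => ?_, fun ρ σ hρσ => ?_⟩
  · obtain ⟨x, rfl | hx⟩ := exists_kaplanskyValuation_sub_lt ha h hP hult y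
    exacts [⟨x, hw x⟩, ⟨x, Valuation.map_eq_of_map_sub_lt hw hx⟩]
  · obtain ⟨x, rfl | hx⟩ := exists_kaplanskyValuation_sub_lt ha h hP hult y
    · exact ⟨x, hw x ▸ hy, by rw [sub_self, map_zero]; exact zero_lt_one⟩
    · exact ⟨x, Valuation.map_eq_of_map_sub_lt hw hx ▸ hy, hx.trans_le hy⟩
  · have hlim := kaplanskyValuation_root_sub_algebraMap ha h hP hult hdeg
    rw [show h.root = aInf from IsAdjoinRoot.mkOfAdjoinEqTop_root hint hgen] at hlim
    rw [hlim, hlim]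
    exact ha.gauge_strictAnti hρσ
end
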